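/- Let G(t,x) = (4πt)^{−1/2} exp(−x²/(4t)) and Ḡ(t,x,y) = G(t, x − y) − G(t, x + y). Let t > 0, 1 ≤ r ≤ ∞, and let f : [0,∞) → ℝ be differentiable with f(0) = 0, f ∈ L^r(0,∞) and f' ∈ L^r(0,∞). Then for every x > 0, the map x ↦ (Ḡ(t,·)*_D f)(x) = ∫₀^∞ Ḡ(t,x,y) f(y) dy is differentiable at x with derivative d/dx (Ḡ(t,·)*_D f)(x) = ∫_ℝ G(t, x − y) (f')^{even}(y) dy, where (f')^{even}(y) = f'(|y|) is the even extension of f'. -/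

import Mathlib

open MeasureTheory
open scoped ENNReal

/-- The one-dimensional heat kernel `G(t,x) = (4πt)^{−1/2} exp(−x²/(4t))`. -/
noncomputable def heatG (t x : ℝ) : ℝ :=
  (Real.sqrt (4 * Real.pi * t))⁻¹ * Real.exp (-(x ^ 2) / (4 * t))

/-!
Both heat kernels `G(t, x ∓ y)` and their `x`-derivatives decay like Gaussians in `y`, locally
uniformly in `x`, while `f` grows at most linearly: `f 0 = 0` and Hölder's inequality on `(0, y)`
give `|f y| ≤ ‖f'‖_{L^r} (1 + y)`. Hence one may differentiate under the integral sign. The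
`x`-derivative of the Dirichlet kernel `G(t, x - y) - G(t, x + y)` is minus the `y`-derivative
of the Neumann kernel `G(t, x - y) + G(t, x + y)`, so a single integration by parts on `(0, ∞)`,
whose boundary term vanishes because `f 0 = 0`, moves the derivative onto `f`. Finally
`∫₀^∞ (G(t, x - y) + G(t, x + y)) f'(y) dy` is the integral of `G(t, x - y) f'(|y|)` over the
line, split at `0`.
-/

open Set Filter Real Topology

section Gaussian

variable {β : ℝ}

lemma exp_neg_mul_sq_add_le (hβ : 0 ≤ β) (a y : ℝ) :
    exp (-β * (a + y) ^ 2) ≤ exp (β * a ^ 2) * exp (-(β / 2) * y ^ 2) := by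
  rw [← exp_add, exp_le_exp]
  nlinarith [mul_nonneg hβ (sq_nonneg (2 * a + y))]

lemma one_add_mul_exp_neg_mul_sq_le (hβ : 0 < β) (y : ℝ) :
    (1 + y) * exp (-β * y ^ 2) ≤ (2 + 2 / β) * exp (-(β / 2) * y ^ 2) := by
  have hlin : 1 + y ≤ (2 + 2 / β) * (1 + β / 2 * y ^ 2) := by
    have : (2 + 2 / β) * (1 + β / 2 * y ^ 2) = 2 + 2 / β + β * y ^ 2 + y ^ 2 := by
      field_simp; ring
    rw [this]
    nlinarith [sq_nonneg (y - 1), mul_nonneg hβ.le (sq_nonneg y), div_pos two_pos hβ]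
  calc (1 + y) * exp (-β * y ^ 2)
      ≤ (2 + 2 / β) * exp (β / 2 * y ^ 2) * exp (-β * y ^ 2) := by
        gcongr
        exact hlin.trans (mul_le_mul_of_nonneg_left (by linarith [add_one_le_exp (β / 2 * y ^ 2)])
          (by positivity))
    _ = (2 + 2 / β) * exp (-(β / 2) * y ^ 2) := by
        rw [mul_assoc, ← exp_add]; ring_nf

lemma tendsto_exp_neg_mul_sq_atTop (hβ : 0 < β) :
    Tendsto (fun y : ℝ => exp (-β * y ^ 2)) atTop (𝓝 0) := by
  refine tendsto_exp_atBot.comp ?_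
  simpa only [neg_mul, Function.comp_def] using
    tendsto_neg_atTop_atBot.comp ((tendsto_pow_atTop two_ne_zero).const_mul_atTop hβ)

lemma memLp_exp_neg_mul_sq (hβ : 0 < β) (q : ℝ≥0∞) :
    MemLp (fun y : ℝ => exp (-β * y ^ 2)) q := by
  have hm : AEStronglyMeasurable (fun y : ℝ => exp (-β * y ^ 2)) volume := by
    fun_prop
  rcases eq_or_ne q 0 with rfl | hq0
  · exact memLp_zero_iff_aestronglyMeasurable.2 hm
  rcases eq_or_ne q ∞ with rfl | hq
  · refine memLp_top_of_bound hm 1 (Eventually.of_forall fun y => ?_)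
    rw [norm_of_nonneg (exp_pos _).le, exp_le_one_iff]
    nlinarith [sq_nonneg y]
  refine (integrable_norm_rpow_iff hm hq0 hq).1 ?_
  refine (integrable_exp_neg_mul_sq (mul_pos hβ (ENNReal.toReal_pos hq0 hq))).congr
    (Eventually.of_forall fun y => ?_)
  simp only [norm_of_nonneg (exp_pos _).le, ← exp_mul]
  ring_nf

lemma integrableOn_Ioi_of_abs_le_exp_neg_mul_sq {h : ℝ → ℝ} {C : ℝ} (hβ : 0 < β)
    (hm : AEStronglyMeasurable h (volume.restrict (Ioi 0)))
    (hh : ∀ y, 0 < y → |h y| ≤ C * exp (-β * y ^ 2)) :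
    IntegrableOn h (Ioi 0) :=
  ((integrable_exp_neg_mul_sq hβ).const_mul C).integrableOn.mono' hm
    ((ae_restrict_mem measurableSet_Ioi).mono hh)

lemma tendsto_atTop_of_abs_le_exp_neg_mul_sq {h : ℝ → ℝ} {C : ℝ} (hβ : 0 < β)
    (hh : ∀ y, 0 < y → |h y| ≤ C * exp (-β * y ^ 2)) :
    Tendsto h atTop (𝓝 0) := by
  refine squeeze_zero_norm' ?_
    (by simpa only [mul_zero] using (tendsto_exp_neg_mul_sq_atTop hβ).const_mul C)
  filter_upwards [eventually_gt_atTop 0] with y hy using (hh y hy)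

lemma abs_mul_le_of_le_exp_neg_mul_sq {a b C A y : ℝ} (hβ : 0 < β) (hy : 0 ≤ y)
    (ha : |a| ≤ C * exp (-β * y ^ 2)) (hb : |b| ≤ A * (1 + y)) :
    |a * b| ≤ C * A * (2 + 2 / β) * exp (-(β / 2) * y ^ 2) := by
  have hC : 0 ≤ C := nonneg_of_mul_nonneg_left ((abs_nonneg a).trans ha) (exp_pos _)
  have hA : 0 ≤ A := nonneg_of_mul_nonneg_left ((abs_nonneg b).trans hb) (by linarith)
  calc |a * b| ≤ C * exp (-β * y ^ 2) * (A * (1 + y)) := by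
        rw [abs_mul]; exact mul_le_mul ha hb (abs_nonneg b) (by positivity)
    _ = C * A * ((1 + y) * exp (-β * y ^ 2)) := by ring
    _ ≤ C * A * ((2 + 2 / β) * exp (-(β / 2) * y ^ 2)) :=
        mul_le_mul_of_nonneg_left (one_add_mul_exp_neg_mul_sq_le hβ y) (by positivity)
    _ = C * A * (2 + 2 / β) * exp (-(β / 2) * y ^ 2) := by ring

end Gaussian

def HasGaussianDecay (φ : ℝ → ℝ) : Prop :=
  ∃ C β : ℝ, 0 < β ∧ ∀ u, |φ u| ≤ C * exp (-β * u ^ 2)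

namespace HasGaussianDecay

variable {φ : ℝ → ℝ}

lemma const_mul (h : HasGaussianDecay φ) (c : ℝ) : HasGaussianDecay fun u => c * φ u := by
  obtain ⟨C, β, hβ, hC⟩ := h
  refine ⟨|c| * C, β, hβ, fun u => ?_⟩
  rw [abs_mul, mul_assoc]
  exact mul_le_mul_of_nonneg_left (hC u) (abs_nonneg c)

lemma id_mul (h : HasGaussianDecay φ) : HasGaussianDecay fun u => u * φ u := by
  obtain ⟨C, β, hβ, hC⟩ := h
  refine ⟨C * (2 + 2 / β), β / 2, half_pos hβ, fun u => ?_⟩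
  have hC0 : 0 ≤ C := nonneg_of_mul_nonneg_left ((abs_nonneg _).trans (hC 0)) (exp_pos _)
  calc |u * φ u| ≤ |u| * (C * exp (-β * u ^ 2)) := by
        rw [abs_mul]; exact mul_le_mul_of_nonneg_left (hC u) (abs_nonneg u)
    _ ≤ C * ((1 + |u|) * exp (-β * |u| ^ 2)) := by
        rw [sq_abs]; nlinarith [exp_pos (-β * u ^ 2)]
    _ ≤ C * ((2 + 2 / β) * exp (-(β / 2) * |u| ^ 2)) :=
        mul_le_mul_of_nonneg_left (one_add_mul_exp_neg_mul_sq_le hβ |u|) hC0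
    _ = C * (2 + 2 / β) * exp (-(β / 2) * u ^ 2) := by rw [sq_abs]; ring

lemma exists_bound_sub_add (h : HasGaussianDecay φ) (R : ℝ) :
    ∃ C β : ℝ, 0 < β ∧ ∀ a, |a| ≤ R → ∀ y, |φ (a - y)| + |φ (a + y)| ≤ C * exp (-β * y ^ 2) := by
  obtain ⟨C, β, hβ, hC⟩ := h
  have hC0 : 0 ≤ C := nonneg_of_mul_nonneg_left ((abs_nonneg _).trans (hC 0)) (exp_pos _)
  have translate : ∀ a, |a| ≤ R → ∀ s,
      |φ (a + s)| ≤ C * exp (β * R ^ 2) * exp (-(β / 2) * s ^ 2) := by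
    intro a ha s
    have haR : a ^ 2 ≤ R ^ 2 := sq_le_sq' (abs_le.1 ha).1 (abs_le.1 ha).2
    calc |φ (a + s)| ≤ C * (exp (β * a ^ 2) * exp (-(β / 2) * s ^ 2)) :=
          (hC _).trans (mul_le_mul_of_nonneg_left (exp_neg_mul_sq_add_le hβ.le a s) hC0)
      _ ≤ C * (exp (β * R ^ 2) * exp (-(β / 2) * s ^ 2)) := by gcongr
      _ = C * exp (β * R ^ 2) * exp (-(β / 2) * s ^ 2) := by ring
  refine ⟨2 * (C * exp (β * R ^ 2)), β / 2, half_pos hβ, fun a ha y => ?_⟩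
  have hm := translate a ha (-y)
  rw [← sub_eq_add_neg, neg_sq] at hm
  linarith [translate a ha y]

lemma comp_sub_left (h : HasGaussianDecay φ) (a : ℝ) : HasGaussianDecay fun y => φ (a - y) := by
  obtain ⟨C, β, hβ, hC⟩ := h.exists_bound_sub_add |a|
  exact ⟨C, β, hβ, fun y => le_trans (by linarith [abs_nonneg (φ (a + y))]) (hC a le_rfl y)⟩

lemma comp_add_left (h : HasGaussianDecay φ) (a : ℝ) : HasGaussianDecay fun y => φ (a + y) := by
  obtain ⟨C, β, hβ, hC⟩ := h.exists_bound_sub_add |a|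
  exact ⟨C, β, hβ, fun y => le_trans (by linarith [abs_nonneg (φ (a - y))]) (hC a le_rfl y)⟩

lemma memLp (h : HasGaussianDecay φ) (hm : AEStronglyMeasurable φ volume) (q : ℝ≥0∞) :
    MemLp φ q volume := by
  obtain ⟨C, β, hβ, hC⟩ := h
  exact ((memLp_exp_neg_mul_sq hβ q).const_mul C).mono' hm
    (Eventually.of_forall fun u => (norm_eq_abs _).trans_le (hC u))

lemma integrableOn_mul_of_memLp (h : HasGaussianDecay φ) (hm : AEStronglyMeasurable φ volume)
    {g : ℝ → ℝ} {s : Set ℝ} {r : ℝ≥0∞} (hr : 1 ≤ r) (hg : MemLp g r (volume.restrict s)) :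
    IntegrableOn (fun y => φ y * g y) s := by
  have := ENNReal.HolderConjugate.conjExponent hr
  exact ((h.memLp hm r.conjExponent).restrict s).integrable_mul hg

end HasGaussianDecay

lemma ENNReal.rpow_le_one_add {a : ℝ≥0∞} {e : ℝ} (he₀ : 0 ≤ e) (he₁ : e ≤ 1) : a ^ e ≤ 1 + a := by
  rcases le_total a 1 with ha | ha
  · exact (ENNReal.rpow_le_one ha he₀).trans le_self_add
  · calc a ^ e ≤ a ^ (1 : ℝ) := ENNReal.rpow_le_rpow_of_exponent_le ha he₁
      _ ≤ 1 + a := by rw [ENNReal.rpow_one]; exact le_add_self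

lemma eLpNorm_one_restrict_le {α E : Type*} [MeasurableSpace α] [NormedAddCommGroup E]
    {μ : Measure α} {g : α → E}
    {r : ℝ≥0∞} (hr : 1 ≤ r) (hg : AEStronglyMeasurable g μ) (s : Set α) :
    eLpNorm g 1 (μ.restrict s) ≤ eLpNorm g r μ * (1 + μ s) := by
  have hinv : 1 / r.toReal ≤ 1 := by
    rcases eq_or_ne r ∞ with rfl | hr'
    · simp
    · exact div_le_one_of_le₀ (by simpa using ENNReal.toReal_mono hr' hr) ENNReal.toReal_nonneg
  calc eLpNorm g 1 (μ.restrict s)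
      ≤ eLpNorm g r (μ.restrict s) * μ.restrict s univ ^ (1 / (1 : ℝ≥0∞).toReal - 1 / r.toReal) :=
        eLpNorm_le_eLpNorm_mul_rpow_measure_univ hr hg.restrict
    _ ≤ eLpNorm g r μ * (1 + μ s) := by
        rw [Measure.restrict_apply_univ]
        gcongr
        · exact Measure.restrict_le_self
        · simp only [ENNReal.toReal_one, div_one]
          exact ENNReal.rpow_le_one_add (by linarith)
            (by linarith [one_div_nonneg.2 (ENNReal.toReal_nonneg (a := r))])

theorem abs_le_eLpNorm_derivWithin_mul_one_add {f : ℝ → ℝ} {r : ℝ≥0∞} (hr : 1 ≤ r)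
    (hf0 : f 0 = 0) (hdiff : DifferentiableOn ℝ f (Ici 0))
    (hf' : MemLp (derivWithin f (Ici 0)) r (volume.restrict (Ioi 0))) {y : ℝ} (hy : 0 ≤ y) :
    |f y| ≤ (eLpNorm (derivWithin f (Ici 0)) r (volume.restrict (Ioi 0))).toReal * (1 + y) := by
  set g := derivWithin f (Ici 0)
  have hL1 : eLpNorm g 1 (volume.restrict (Ioc 0 y)) ≤
      eLpNorm g r (volume.restrict (Ioi 0)) * ENNReal.ofReal (1 + y) := by
    have := eLpNorm_one_restrict_le hr hf'.1 (Ioc 0 y)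
    rw [ENNReal.ofReal_add zero_le_one hy, ENNReal.ofReal_one]
    rwa [Measure.restrict_restrict_of_subset Ioc_subset_Ioi_self,
      Measure.restrict_apply measurableSet_Ioc, Ioc_inter_Ioi, sup_of_le_left le_rfl,
      Real.volume_Ioc, sub_zero] at this
  have hfin : eLpNorm g r (volume.restrict (Ioi 0)) * ENNReal.ofReal (1 + y) ≠ ∞ :=
    ENNReal.mul_ne_top hf'.2.ne ENNReal.ofReal_ne_top
  have hint : IntegrableOn g (Ioc 0 y) :=
    memLp_one_iff_integrable.1
      ⟨hf'.1.mono_measure (Measure.restrict_mono Ioc_subset_Ioi_self le_rfl),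
        hL1.trans_lt hfin.lt_top⟩
  have hftc : f y = ∫ s in Ioc 0 y, g s := by
    rw [← intervalIntegral.integral_of_le hy,
      intervalIntegral.integral_eq_sub_of_hasDeriv_right_of_le hy
        (hdiff.continuousOn.mono Icc_subset_Ici_self)
        (fun s hs => ((hdiff s hs.1.le).hasDerivWithinAt.hasDerivAt
          (Ici_mem_nhds hs.1)).hasDerivWithinAt)
        ((intervalIntegrable_iff_integrableOn_Ioc_of_le hy).2 hint), hf0, sub_zero]
  have hle : ‖f y‖ₑ ≤ eLpNorm g r (volume.restrict (Ioi 0)) * ENNReal.ofReal (1 + y) := by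
    rw [hftc]
    exact (enorm_integral_le_lintegral_enorm g).trans
      ((eLpNorm_one_eq_lintegral_enorm (f := g)).symm.trans_le hL1)
  rw [← norm_eq_abs, ← toReal_enorm, ← ENNReal.toReal_ofReal (by linarith : 0 ≤ 1 + y),
    ← ENNReal.toReal_mul]
  exact ENNReal.toReal_mono hfin hle

section DirichletConvolution

variable {k k' f : ℝ → ℝ} {A : ℝ}

lemma measurable_of_forall_hasDerivAt (hk : ∀ u, HasDerivAt k (k' u) u) : Measurable k' := by
  rw [show k' = deriv k from funext fun u => (hk u).deriv.symm]
  exact measurable_deriv k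

theorem hasDerivAt_integral_Ioi_sub_mul (hk : ∀ u, HasDerivAt k (k' u) u)
    (hkd : HasGaussianDecay k) (hk'd : HasGaussianDecay k')
    (hfm : AEStronglyMeasurable f (volume.restrict (Ioi 0)))
    (hfA : ∀ y, 0 ≤ y → |f y| ≤ A * (1 + y)) (x : ℝ) :
    HasDerivAt (fun z => ∫ y in Ioi 0, (k (z - y) - k (z + y)) * f y)
      (∫ y in Ioi 0, (k' (x - y) - k' (x + y)) * f y) x := by
  obtain ⟨C, β, hβ, hC⟩ := hkd.exists_bound_sub_add |x|
  obtain ⟨C', β', hβ', hC'⟩ := hk'd.exists_bound_sub_add (|x| + 1)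
  have hkc : Continuous k := continuous_iff_continuousAt.2 fun u => (hk u).continuousAt
  have hk'm := measurable_of_forall_hasDerivAt hk
  refine (hasDerivAt_integral_of_dominated_loc_of_deriv_le (Metric.ball_mem_nhds x one_pos)
    (F' := fun z y => (k' (z - y) - k' (z + y)) * f y)
    (bound := fun y => C' * A * (2 + 2 / β') * exp (-(β' / 2) * y ^ 2))
    (Eventually.of_forall fun z =>
      (by fun_prop : Continuous fun y => k (z - y) - k (z + y)).aestronglyMeasurable.mul hfm)
    ?_ ((by fun_prop : Measurable fun y => k' (x - y) - k' (x + y)).aestronglyMeasurable.mul hfm)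
    ?_ ?_ ?_).2
  · refine integrableOn_Ioi_of_abs_le_exp_neg_mul_sq (C := C * A * (2 + 2 / β)) (half_pos hβ)
      ((by fun_prop : Continuous fun y => k (x - y) - k (x + y)).aestronglyMeasurable.mul hfm)
      fun y hy => ?_
    exact abs_mul_le_of_le_exp_neg_mul_sq hβ hy.le ((abs_sub _ _).trans (hC x le_rfl y))
      (hfA y hy.le)
  · filter_upwards [ae_restrict_mem measurableSet_Ioi] with y hy z hz
    have hzR : |z| ≤ |x| + 1 := by
      rw [Metric.mem_ball, Real.dist_eq] at hz
      linarith [abs_sub_abs_le_abs_sub z x]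
    exact abs_mul_le_of_le_exp_neg_mul_sq hβ' (le_of_lt hy)
      ((abs_sub _ _).trans (hC' z hzR y)) (hfA y (le_of_lt hy))
  · exact ((integrable_exp_neg_mul_sq (half_pos hβ')).const_mul _).integrableOn
  · exact Eventually.of_forall fun y z _ =>
      (((hk (z - y)).comp_sub_const z y).sub ((hk (z + y)).comp_add_const z y)).mul_const (f y)

theorem integral_Ioi_sub_mul_eq_add_mul_derivWithin (hk : ∀ u, HasDerivAt k (k' u) u)
    (hkd : HasGaussianDecay k) (hk'd : HasGaussianDecay k') (hf0 : f 0 = 0)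
    (hdiff : DifferentiableOn ℝ f (Ici 0)) (hfA : ∀ y, 0 ≤ y → |f y| ≤ A * (1 + y)) (x : ℝ)
    (hint : IntegrableOn (fun y => (k (x - y) + k (x + y)) * derivWithin f (Ici 0) y) (Ioi 0)) :
    ∫ y in Ioi 0, (k' (x - y) - k' (x + y)) * f y =
      ∫ y in Ioi 0, (k (x - y) + k (x + y)) * derivWithin f (Ici 0) y := by
  obtain ⟨C, β, hβ, hC⟩ := hkd.exists_bound_sub_add |x|
  obtain ⟨C', β', hβ', hC'⟩ := hk'd.exists_bound_sub_add |x|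
  have hkc : Continuous k := continuous_iff_continuousAt.2 fun u => (hk u).continuousAt
  have hk'm := measurable_of_forall_hasDerivAt hk
  have hfc : ContinuousOn f (Ici 0) := hdiff.continuousOn
  have hzero : Tendsto (fun y => (k (x - y) + k (x + y)) * f y) (𝓝[>] 0) (𝓝 0) := by
    have h : ContinuousWithinAt (fun y => (k (x - y) + k (x + y)) * f y) (Ioi 0) 0 :=
      (by fun_prop : Continuous fun y => k (x - y) + k (x + y)).continuousWithinAt.mul
        ((hfc 0 self_mem_Ici).mono Ioi_subset_Ici_self)
    simpa [ContinuousWithinAt, hf0] using h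
  have hinfty : Tendsto (fun y => (k (x - y) + k (x + y)) * f y) atTop (𝓝 0) :=
    tendsto_atTop_of_abs_le_exp_neg_mul_sq (half_pos hβ) fun y hy =>
      abs_mul_le_of_le_exp_neg_mul_sq hβ hy.le ((abs_add_le _ _).trans (hC x le_rfl y))
        (hfA y hy.le)
  have hint' : IntegrableOn (fun y => (-k' (x - y) + k' (x + y)) * f y) (Ioi 0) :=
    integrableOn_Ioi_of_abs_le_exp_neg_mul_sq (half_pos hβ')
      ((by fun_prop : Measurable fun y => -k' (x - y) + k' (x + y)).aestronglyMeasurable.mul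
        (hfc.mono Ioi_subset_Ici_self |>.aestronglyMeasurable measurableSet_Ioi))
      fun y hy => abs_mul_le_of_le_exp_neg_mul_sq hβ' hy.le
        ((abs_add_le _ _).trans (by simpa only [abs_neg] using hC' x le_rfl y)) (hfA y hy.le)
  have hibp := integral_Ioi_mul_deriv_eq_deriv_mul (u := fun y => k (x - y) + k (x + y))
    (fun y _ => ((hk (x - y)).comp_const_sub x y).add ((hk (x + y)).comp_const_add x y))
    (fun y hy => (hdiff y (mem_Ici.2 (le_of_lt hy))).hasDerivWithinAt.hasDerivAt
      (Ici_mem_nhds hy)) hint hint' hzero hinfty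
  rw [hibp, sub_self, zero_sub, ← integral_neg]
  congr 1 with y
  ring

end DirichletConvolution

lemma integral_eq_integral_Ioi_add_comp_neg {h : ℝ → ℝ} (h₁ : IntegrableOn h (Ioi 0))
    (h₂ : IntegrableOn (fun y => h (-y)) (Ioi 0)) :
    ∫ y, h y = ∫ y in Ioi 0, (h y + h (-y)) := by
  have hIio : IntegrableOn h (Iio 0) := by
    simpa only [neg_neg] using
      IntegrableOn.comp_neg_Iio (c := 0) (f := fun y => h (-y)) (by rwa [neg_zero])
  have hIic : IntegrableOn h (Iic 0) := (integrableOn_Iic_iff_integrableOn_Iio (f := h)).2 hIio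
  rw [← intervalIntegral.integral_Iic_add_Ioi hIic h₁, integral_add h₁ h₂, add_comm,
    integral_comp_neg_Ioi, neg_zero]

lemma hasDerivAt_heatG (t u : ℝ) :
    HasDerivAt (heatG t) (-(2 * t)⁻¹ * (u * heatG t u)) u := by
  have h := (((hasDerivAt_pow 2 u).neg.div_const (4 * t)).exp).const_mul (√(4 * π * t))⁻¹
  refine h.congr_deriv ?_
  simp only [heatG, Pi.neg_apply]
  push_cast
  ring

lemma hasGaussianDecay_heatG {t : ℝ} (ht : 0 < t) : HasGaussianDecay (heatG t) := by
  refine ⟨(√(4 * π * t))⁻¹, (4 * t)⁻¹, by positivity, fun u => ?_⟩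
  rw [heatG, abs_of_nonneg (by positivity)]
  exact le_of_eq (by ring_nf)

@[fun_prop]
lemma continuous_heatG (t : ℝ) : Continuous (heatG t) :=
  continuous_iff_continuousAt.2 fun u => (hasDerivAt_heatG t u).continuousAt

theorem stmt14_general (t : ℝ) (ht : 0 < t) (r : ℝ≥0∞) (hr : 1 ≤ r)
    (f : ℝ → ℝ) (hf0 : f 0 = 0)
    (hdiff : DifferentiableOn ℝ f (Set.Ici 0))
    (hf'r : MemLp (derivWithin f (Set.Ici 0)) r (volume.restrict (Set.Ioi 0))) :
    ∀ x : ℝ, 0 < x →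
      HasDerivAt (fun z => ∫ y in Set.Ioi (0 : ℝ), (heatG t (z - y) - heatG t (z + y)) * f y)
        (∫ y : ℝ, heatG t (x - y) * derivWithin f (Set.Ici 0) |y|) x := by
  intro x _
  set g := derivWithin f (Ici 0)
  have hG := hasGaussianDecay_heatG ht
  have hG' : HasGaussianDecay fun u => -(2 * t)⁻¹ * (u * heatG t u) := hG.id_mul.const_mul _
  have hfA y (hy : 0 ≤ y) := abs_le_eLpNorm_derivWithin_mul_one_add hr hf0 hdiff hf'r hy
  have hfm : AEStronglyMeasurable f (volume.restrict (Ioi 0)) :=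
    (hdiff.continuousOn.mono Ioi_subset_Ici_self).aestronglyMeasurable measurableSet_Ioi
  have hsub : IntegrableOn (fun y => heatG t (x - y) * g y) (Ioi 0) :=
    (hG.comp_sub_left x).integrableOn_mul_of_memLp (by fun_prop) hr hf'r
  have hadd : IntegrableOn (fun y => heatG t (x + y) * g y) (Ioi 0) :=
    (hG.comp_add_left x).integrableOn_mul_of_memLp (by fun_prop) hr hf'r
  have heven : ∫ y, heatG t (x - y) * g |y| =
      ∫ y in Ioi 0, (heatG t (x - y) + heatG t (x + y)) * g y := by
    rw [integral_eq_integral_Ioi_add_comp_neg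
      (hsub.congr_fun (fun y hy => by simp only [abs_of_pos (mem_Ioi.1 hy)]) measurableSet_Ioi)
      (hadd.congr_fun (fun y hy => by simp only [abs_neg, abs_of_pos (mem_Ioi.1 hy),
        sub_neg_eq_add]) measurableSet_Ioi)]
    refine setIntegral_congr_fun measurableSet_Ioi fun y hy => ?_
    simp only [abs_neg, abs_of_pos (mem_Ioi.1 hy), sub_neg_eq_add]
    ring
  rw [heven, ← integral_Ioi_sub_mul_eq_add_mul_derivWithin (hasDerivAt_heatG t) hG hG' hf0 hdiff
    hfA x ((hsub.add hadd).congr_fun (fun y _ => (add_mul _ _ _).symm) measurableSet_Ioi)]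
  exact hasDerivAt_integral_Ioi_sub_mul (hasDerivAt_heatG t) hG hG' hfm hfA x

/-- Differentiation of the Dirichlet-kernel convolution: for `f` differentiable on `[0,∞)`
with `f(0) = 0` and `f, f' ∈ L^r(0,∞)`, one has
`d/dx (Ḡ(t,·) *_D f)(x) = ∫_ℝ G(t, x−y) (f')^{even}(y) dy`, where `(f')^{even}(y) = f'(|y|)`
is the even extension of `f'`. -/
theorem stmt14 (t : ℝ) (ht : 0 < t) (r : ℝ≥0∞) (hr : 1 ≤ r)
    (f : ℝ → ℝ) (hf0 : f 0 = 0)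
    (hdiff : DifferentiableOn ℝ f (Set.Ici 0))
    (hfr : MemLp f r (volume.restrict (Set.Ioi 0)))
    (hf'r : MemLp (derivWithin f (Set.Ici 0)) r (volume.restrict (Set.Ioi 0))) :
    ∀ x : ℝ, 0 < x →
      HasDerivAt (fun z => ∫ y in Set.Ioi (0 : ℝ), (heatG t (z - y) - heatG t (z + y)) * f y)
        (∫ y : ℝ, heatG t (x - y) * derivWithin f (Set.Ici 0) |y|) x :=
  stmt14_general t ht r hr f hf0 hdiff hf'r
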